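/- The kernel of π (the toric ideal of the Segre-Veronese configuration) is generated, as an ideal of K[y_α : α ∈ V], by the set G of quadratic binomials y_α y_β − y_{γ_odd} y_{γ_even} taken over all nonsorted pairs {α, β} of admissible tuples. -/

import Mathlib

open MvPolynomial Finset

variable (τ d M : ℕ) (b c s r : Fin M → ℕ)

/-- A tuple α = (α_1,…,α_τ) with entries in {1,…,d} is admissible if it is
weakly increasing and for every i ∈ {1,…,M}, c_i ≤ #{k : s_i ≤ α_k ≤ r_i} ≤ b_i. -/
structure Admissible (α : Fin τ → ℕ) : Prop where
  mono : Monotone α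
  mem : ∀ k, 1 ≤ α k ∧ α k ≤ d
  count : ∀ i : Fin M,
    c i ≤ (Finset.univ.filter fun k : Fin τ => s i ≤ α k ∧ α k ≤ r i).card ∧
    (Finset.univ.filter fun k : Fin τ => s i ≤ α k ∧ α k ≤ r i).card ≤ b i

/-- `IsSplit α β γodd γeven` : γodd and γeven are the odd- and even-position
subsequences of the weakly increasing rearrangement γ of the 2τ entries of α and β. -/
def IsSplit {τ : ℕ} (α β γodd γeven : Fin τ → ℕ) : Prop :=
  ∃ γ : Fin (2 * τ) → ℕ, Monotone γ ∧
    ((List.ofFn γ : List ℕ) : Multiset ℕ)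
      = ((List.ofFn α ++ List.ofFn β : List ℕ) : Multiset ℕ) ∧
    ∀ t : Fin τ, γodd t = γ ⟨2 * t.1, by have := t.isLt; omega⟩ ∧
      γeven t = γ ⟨2 * t.1 + 1, by have := t.isLt; omega⟩

/-- The pair (α, β), in this order, is sorted: α_1 ≤ β_1 ≤ α_2 ≤ β_2 ≤ ⋯ ≤ α_τ ≤ β_τ. -/
def PairOrdered {τ : ℕ} (α β : Fin τ → ℕ) : Prop :=
  (∀ t, α t ≤ β t) ∧ ∀ t t' : Fin τ, t.1 + 1 = t'.1 → β t ≤ α t'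

/-- The pair {α, β} is nonsorted: neither (α, β) nor (β, α) is sorted. -/
def Nonsorted {τ : ℕ} (α β : Fin τ → ℕ) : Prop :=
  ¬ (PairOrdered α β ∨ PairOrdered β α)

/-- The toric (Segre–Veronese) homomorphism π with π(y_α) = q_{α_1} ⋯ q_{α_τ},
where q_1, …, q_d are the variables of `MvPolynomial (Fin d) K` (the 1-based
entry j of α corresponds to the variable indexed by j − 1 : Fin d). -/
noncomputable def piSV (K : Type*) [Field K] :
    MvPolynomial {x : Fin τ → ℕ // Admissible τ d M b c s r x} K →ₐ[K]
      MvPolynomial (Fin d) K :=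
  aeval fun v => ∏ k : Fin τ, X (⟨v.1 k - 1, by have := v.2.mem k; omega⟩ : Fin d)

/-- The quadratic move e_{γodd} + e_{γeven} − e_α − e_β. -/
def QuadMove {V : Type*} [DecidableEq V] (α β γodd γeven : V) : V → ℤ := fun v =>
  (if v = γodd then 1 else 0) + (if v = γeven then 1 else 0)
    - (if v = α then 1 else 0) - (if v = β then 1 else 0)

/-!
The kernel of `π` is spanned by the binomials `y^m - y^m'` between monomials with the same image,
i.e. whose factors have the same multiset of entries (the same `content`). Replacing a nonsorted
pair `{α, β}` by its sorted split `(γ_odd, γ_even)` keeps the content and changes a monomial only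
modulo `G`; the split is admissible because the numbers of entries of a sorted pair in an interval
differ by at most one. It also lowers a lexicographic `weight` built from the distribution functions
`countLE v a = #{k | v k ≤ a}`: sorting balances `countLE α` and `countLE β` pointwise, which
lowers their sum of squares unless they already differ by at most one everywhere; then, the pair
being nonsorted, they cross, and sorting pushes their totals apart. Hence every monomial is
congruent modulo `G` to a sorted monomial of the same content. A sorted monomial of degree `n` is
determined by its content: the distribution function of its smallest factor is the rounded-up
average of those of all factors, hence is read off the content, and one inducts on `n`.
-/

namespace MvPolynomial

theorem ker_eq_span_monomial_sub_monomial {R σ ι : Type*} [CommRing R]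
    (f : MvPolynomial σ R →ₐ[R] MvPolynomial ι R) (Φ : (σ →₀ ℕ) → ι →₀ ℕ)
    (hf : ∀ u, f (monomial u 1) = monomial (Φ u) 1) :
    RingHom.ker f =
      Ideal.span {q | ∃ u u', Φ u = Φ u' ∧ q = monomial u 1 - monomial u' 1} := by
  set B := {q : MvPolynomial σ R | ∃ u u', Φ u = Φ u' ∧ q = monomial u 1 - monomial u' 1}
  have hf' (p : MvPolynomial σ R) : f p = AddMonoidAlgebra.mapDomain Φ p := by
    induction p using MvPolynomial.induction_on' with
    | monomial u a =>
      rw [← single_eq_monomial, AddMonoidAlgebra.mapDomain_single, single_eq_monomial,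
        ← mul_one a, ← smul_eq_mul, ← smul_monomial, map_smul, hf, smul_monomial,
        single_eq_monomial]
    | add p q hp hq => rw [map_add, AddMonoidAlgebra.mapDomain_add, hp, hq]
  refine le_antisymm (fun p hp => ?_) (Ideal.span_le.2 ?_)
  · -- `g` moves every exponent to a fixed representative of its fibre under `Φ`
    let g := Function.invFun Φ ∘ Φ
    have hsub (q : MvPolynomial σ R) : q - AddMonoidAlgebra.mapDomain g q ∈ Ideal.span B := by
      induction q using MvPolynomial.induction_on' with
      | monomial u a =>
        have : monomial u a - AddMonoidAlgebra.mapDomain g (monomial u a)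
            = C a * (monomial u 1 - monomial (g u) 1) := by
          rw [mul_sub, C_mul_monomial, C_mul_monomial, mul_one, ← single_eq_monomial,
            AddMonoidAlgebra.mapDomain_single, single_eq_monomial, single_eq_monomial]
        rw [this]
        exact Ideal.mul_mem_left _ _
          (Ideal.subset_span ⟨u, g u, (Function.invFun_eq ⟨u, rfl⟩).symm, rfl⟩)
      | add p q hp hq =>
        rw [AddMonoidAlgebra.mapDomain_add, add_sub_add_comm]
        exact Ideal.add_mem _ hp hq
    have : AddMonoidAlgebra.mapDomain g p
        = AddMonoidAlgebra.mapDomain (Function.invFun Φ) (f p) := by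
      apply AddMonoidAlgebra.coeff_injective
      simp [hf', g, Finsupp.mapDomain_comp]
    simpa [this, RingHom.mem_ker.1 hp] using hsub p
  · rintro _ ⟨u, u', h, rfl⟩
    simp [RingHom.mem_ker, hf, h]

theorem prod_map_X_eq_monomial {R σ : Type*} [CommSemiring R] [DecidableEq σ]
    (m : Multiset σ) :
    ((m.map X).prod : MvPolynomial σ R) = monomial (Multiset.toFinsupp m) 1 := by
  induction m using Multiset.induction with
  | empty => simp
  | cons a m ih =>
    rw [Multiset.map_cons, Multiset.prod_cons, ih, X, monomial_mul, one_mul,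
      ← Multiset.singleton_add, map_add, Multiset.toFinsupp_singleton]

theorem ker_aeval_prod_map_X {R σ ι : Type*} [CommRing R] (φ : σ → Multiset ι) :
    RingHom.ker (aeval (fun v => ((φ v).map X).prod) : MvPolynomial σ R →ₐ[R] MvPolynomial ι R) =
      Ideal.span {q | ∃ m m' : Multiset σ, m.bind φ = m'.bind φ ∧
        q = (m.map X).prod - (m'.map X).prod} := by
  classical
  rw [ker_eq_span_monomial_sub_monomial _
    (fun u => Multiset.toFinsupp ((Multiset.toFinsupp.symm u).bind φ))]
  · congr 1
    ext q
    constructor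
    · rintro ⟨u, u', h, rfl⟩
      refine ⟨Multiset.toFinsupp.symm u, Multiset.toFinsupp.symm u',
        Multiset.toFinsupp.injective h, ?_⟩
      simp [prod_map_X_eq_monomial]
    · rintro ⟨m, m', h, rfl⟩
      exact ⟨Multiset.toFinsupp m, Multiset.toFinsupp m', by simp [h],
        by simp [prod_map_X_eq_monomial]⟩
  · intro u
    rw [← AddEquiv.apply_symm_apply Multiset.toFinsupp u, ← prod_map_X_eq_monomial,
      map_multiset_prod, Multiset.map_map, AddEquiv.symm_apply_apply, ← prod_map_X_eq_monomial,
      Multiset.map_bind, Multiset.prod_bind]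
    simp only [Function.comp_apply, aeval_X]

end MvPolynomial

theorem Fin.sum_univ_two_mul {A : Type*} [AddCommMonoid A] {n : ℕ} (f : Fin (2 * n) → A) :
    ∑ j, f j = ∑ t : Fin n, (f ⟨2 * t, by omega⟩ + f ⟨2 * t + 1, by omega⟩) := by
  rw [← (finProdFinEquiv.trans (finCongr (Nat.mul_comm n 2))).sum_comp, Fintype.sum_prod_type]
  refine sum_congr rfl fun t _ => ?_
  rw [Fin.sum_univ_two]
  congr 2 <;> ext <;> simp [finProdFinEquiv, Nat.mul_comm, Nat.add_comm]

theorem Multiset.exists_eq_cons_cons_of_not_forall {α : Type*} {R : α → α → Prop}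
    (hR : ∀ a, R a a) {m : Multiset α} (h : ¬ ∀ x ∈ m, ∀ y ∈ m, R x y) :
    ∃ x y t, m = x ::ₘ y ::ₘ t ∧ ¬ R x y := by
  push Not at h
  obtain ⟨x, hx, y, hy, hxy⟩ := h
  obtain ⟨t, rfl⟩ := Multiset.exists_cons_of_mem hx
  have hyt : y ∈ t := (Multiset.mem_cons.1 hy).resolve_left fun h => hxy (h ▸ hR x)
  obtain ⟨t, rfl⟩ := Multiset.exists_cons_of_mem hyt
  exact ⟨x, y, t, rfl, hxy⟩

namespace Nat

theorem sq_add_sq_le_of_balanced {u v p q : ℕ} (hs : u + v = p + q) (hv : v ≤ u)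
    (hu : u ≤ v + 1) : u ^ 2 + v ^ 2 ≤ p ^ 2 + q ^ 2 := by
  obtain rfl | rfl : u = v ∨ u = v + 1 := by omega
  · zify at hs ⊢
    nlinarith [sq_nonneg ((p : ℤ) - q)]
  · rcases lt_or_gt_of_ne (by omega : p ≠ q) with hpq | hpq <;> nlinarith

theorem sq_add_sq_lt_of_balanced {u v p q : ℕ} (hs : u + v = p + q) (hv : v ≤ u)
    (hu : u ≤ v + 1) (hpq : p + 2 ≤ q ∨ q + 2 ≤ p) : u ^ 2 + v ^ 2 < p ^ 2 + q ^ 2 := by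
  rcases hpq with hpq | hpq <;> nlinarith

theorem sq_add_sq_lt_of_lt {u v p q : ℕ} (hs : u + v = p + q) (hp : p < u) (hq : q < u) :
    p ^ 2 + q ^ 2 < u ^ 2 + v ^ 2 := by
  zify at hs hp hq ⊢
  nlinarith [mul_pos (sub_pos.2 hp) (sub_pos.2 hq)]

end Nat

section

variable {τ d M b c s r}

namespace SegreVeronese

def entries (v : Fin τ → ℕ) : Multiset ℕ := univ.val.map v

theorem entries_eq_sum (v : Fin τ → ℕ) : entries v = ∑ k, {v k} := by
  rw [entries, ← Multiset.sum_map_singleton (univ.val.map v), Multiset.map_map]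
  rfl

theorem countP_entries (v : Fin τ → ℕ) (p : ℕ → Prop) [DecidablePred p] :
    (entries v).countP p = #{k | p (v k)} := by
  rw [entries, Multiset.countP_map]
  rfl

def countLE (v : Fin τ → ℕ) (a : ℕ) : ℕ := #{k | v k ≤ a}

theorem countLE_le (v : Fin τ → ℕ) (a : ℕ) : countLE v a ≤ τ :=
  (card_filter_le _ _).trans_eq (card_fin τ)

theorem countLE_eq_of_forall_lt {v : Fin τ → ℕ} {A a : ℕ} (hv : ∀ k, v k < A) (ha : A ≤ a) :
    countLE v a = τ := by
  rw [countLE, filter_true_of_mem fun k _ => by have := hv k; omega, card_fin]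

theorem sum_countLE_le (v : Fin τ → ℕ) (A : ℕ) : ∑ a ∈ range A, countLE v a ≤ τ * A := by
  simpa [mul_comm] using sum_le_card_nsmul (range A) _ _ fun a _ => countLE_le v a

theorem le_iff_lt_countLE {v : Fin τ → ℕ} (hv : Monotone v) (t : Fin τ) (a : ℕ) :
    v t ≤ a ↔ t.1 < countLE v a := by
  constructor
  · intro h
    calc t.1 < #(Iic t) := by rw [Fin.card_Iic]; omega
      _ ≤ countLE v a :=
        card_le_card fun k hk => mem_filter.2 ⟨mem_univ k, (hv (mem_Iic.1 hk)).trans h⟩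
  · intro h
    by_contra! hlt
    have : countLE v a ≤ #(Iio t) := card_le_card fun k hk =>
      mem_Iio.2 (hv.reflect_lt ((mem_filter.1 hk).2.trans_lt hlt))
    rw [Fin.card_Iio] at this
    omega

theorem eq_of_countLE_eq {x y : Fin τ → ℕ} (hx : Monotone x) (hy : Monotone y)
    (h : countLE x = countLE y) : x = y :=
  funext fun t => le_antisymm
    ((le_iff_lt_countLE hx t _).2 (h ▸ (le_iff_lt_countLE hy t _).1 le_rfl))
    ((le_iff_lt_countLE hy t _).2 (h ▸ (le_iff_lt_countLE hx t _).1 le_rfl))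

end SegreVeronese

open SegreVeronese

theorem pairOrdered_self {v : Fin τ → ℕ} (hv : Monotone v) : PairOrdered v v :=
  ⟨fun _ => le_rfl, fun t t' h => hv (Fin.le_iff_val_le_val.2 (by omega))⟩

namespace PairOrdered

variable {x y : Fin τ → ℕ}

theorem of_countLE (hx : Monotone x) (hy : Monotone y)
    (h : ∀ a, countLE y a ≤ countLE x a ∧ countLE x a ≤ countLE y a + 1) : PairOrdered x y :=
  ⟨fun t => (le_iff_lt_countLE hx t _).2 <|
      ((le_iff_lt_countLE hy t _).1 le_rfl).trans_le (h _).1,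
    fun t t' htt' => (le_iff_lt_countLE hy t _).2 <| by
      have := (le_iff_lt_countLE hx t' (x t')).1 le_rfl
      have := h (x t')
      omega⟩

variable (h : PairOrdered x y)
include h

theorem card_filter_le {Q : ℕ → Prop} [DecidablePred Q] (hQ : Antitone Q) :
    #{t | Q (y t)} ≤ #{t | Q (x t)} :=
  card_le_card fun t ht => mem_filter.2 ⟨mem_univ t, hQ (h.1 t) (mem_filter.1 ht).2⟩

theorem card_filter_le_add_one {Q : ℕ → Prop} [DecidablePred Q] (hQ : Antitone Q) :
    #{t | Q (x t)} ≤ #{t | Q (y t)} + 1 := by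
  cases τ with
  | zero => simp
  | succ n =>
    rw [card_filter, card_filter, Fin.sum_univ_succ, Fin.sum_univ_castSucc]
    have hsucc : ∑ i : Fin n, (if Q (x i.succ) then 1 else 0)
        ≤ ∑ i : Fin n, (if Q (y i.castSucc) then 1 else 0) :=
      sum_le_sum fun i _ => by
        have := hQ (h.2 i.castSucc i.succ rfl)
        split_ifs <;> simp_all
    have hzero : (if Q (x 0) then 1 else 0) ≤ 1 := by split_ifs <;> simp
    omega

theorem countLE_le_countLE (a : ℕ) :
    countLE y a ≤ countLE x a ∧ countLE x a ≤ countLE y a + 1 :=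
  ⟨h.card_filter_le antitone_le, h.card_filter_le_add_one antitone_le⟩

theorem card_interval_le_add_one (lo hi : ℕ) :
    #{t | lo ≤ y t ∧ y t ≤ hi} ≤ #{t | lo ≤ x t ∧ x t ≤ hi} + 1 ∧
      #{t | lo ≤ x t ∧ x t ≤ hi} ≤ #{t | lo ≤ y t ∧ y t ≤ hi} + 1 := by
  -- `[lo, hi]` is the difference of the lower sets `(· ≤ hi)` and `(· ≤ hi) ∩ (· < lo)`
  have hsplit (v : Fin τ → ℕ) : #{t | lo ≤ v t ∧ v t ≤ hi} + #{t | v t ≤ hi ∧ v t < lo}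
      = #{t | v t ≤ hi} := by
    rw [← card_union_of_disjoint (disjoint_filter.2 fun _ _ h₁ h₂ => by omega), ← filter_or]
    exact congrArg card (filter_congr fun _ _ => by omega)
  have hQ : Antitone fun a => a ≤ hi ∧ a < lo := fun _ _ hab hb =>
    ⟨hab.trans hb.1, hab.trans_lt hb.2⟩
  have := h.card_filter_le (antitone_le (x := hi))
  have := h.card_filter_le hQ
  have := h.card_filter_le_add_one (antitone_le (x := hi))
  have := h.card_filter_le_add_one hQ
  have := hsplit x
  have := hsplit y
  omega

end PairOrdered

theorem Nonsorted.exists_countLE_lt {α β : Fin τ → ℕ} (hns : Nonsorted α β) (hα : Monotone α)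
    (hβ : Monotone β)
    (hclose : ∀ a, countLE α a ≤ countLE β a + 1 ∧ countLE β a ≤ countLE α a + 1) :
    (∃ a, countLE α a < countLE β a) ∧ ∃ a, countLE β a < countLE α a := by
  constructor <;> by_contra! H
  · exact hns (.inl (PairOrdered.of_countLE hα hβ fun a => ⟨H a, (hclose a).1⟩))
  · exact hns (.inr (PairOrdered.of_countLE hβ hα fun a => ⟨H a, (hclose a).2⟩))

namespace IsSplit

variable {α β γo γe : Fin τ → ℕ} (h : IsSplit α β γo γe)
include h

theorem pairOrdered : PairOrdered γo γe := by
  obtain ⟨γ, hγ, -, hodd⟩ := h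
  refine ⟨fun t => ?_, fun t t' htt' => ?_⟩
  · rw [(hodd t).1, (hodd t).2]
    exact hγ (Fin.le_iff_val_le_val.2 (by simp))
  · rw [(hodd t).2, (hodd t').1]
    exact hγ (Fin.le_iff_val_le_val.2 (by simp; omega))

theorem monotone_odd : Monotone γo := by
  obtain ⟨γ, hγ, -, hodd⟩ := h
  intro t t' htt'
  rw [(hodd t).1, (hodd t').1]
  exact hγ (Fin.le_iff_val_le_val.2 (by simp; omega))

theorem monotone_even : Monotone γe := by
  obtain ⟨γ, hγ, -, hodd⟩ := h
  intro t t' htt'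
  rw [(hodd t).2, (hodd t').2]
  exact hγ (Fin.le_iff_val_le_val.2 (by simp; omega))

theorem entries_add : entries γo + entries γe = entries α + entries β := by
  obtain ⟨γ, -, hperm, hodd⟩ := h
  have hγ : entries γ = entries α + entries β := by
    simpa only [entries, Fin.univ_val_map, ← Multiset.coe_add] using hperm
  rw [← hγ, entries_eq_sum, entries_eq_sum, entries_eq_sum, Fin.sum_univ_two_mul,
    ← sum_add_distrib]
  exact sum_congr rfl fun t _ => by rw [(hodd t).1, (hodd t).2]

theorem countLE_add (a : ℕ) : countLE γo a + countLE γe a = countLE α a + countLE β a := by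
  simpa only [Multiset.countP_add, countP_entries, countLE] using
    congrArg (Multiset.countP (· ≤ a)) h.entries_add

theorem admissible (hα : Admissible τ d M b c s r α) (hβ : Admissible τ d M b c s r β) :
    Admissible τ d M b c s r γo ∧ Admissible τ d M b c s r γe := by
  have hmem : ∀ a ∈ entries γo + entries γe, 1 ≤ a ∧ a ≤ d := by
    rw [h.entries_add]
    intro a ha
    rcases Multiset.mem_add.1 ha with ha | ha <;> obtain ⟨k, -, rfl⟩ := Multiset.mem_map.1 ha
    exacts [hα.mem k, hβ.mem k]
  have hcount (i : Fin M) :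
      (c i ≤ #{t | s i ≤ γo t ∧ γo t ≤ r i} ∧ #{t | s i ≤ γo t ∧ γo t ≤ r i} ≤ b i) ∧
        (c i ≤ #{t | s i ≤ γe t ∧ γe t ≤ r i} ∧ #{t | s i ≤ γe t ∧ γe t ≤ r i} ≤ b i) := by
    have := congrArg (Multiset.countP fun a => s i ≤ a ∧ a ≤ r i) h.entries_add
    simp only [Multiset.countP_add, countP_entries] at this
    have := h.pairOrdered.card_interval_le_add_one (s i) (r i)
    have := hα.count i
    have := hβ.count i
    omega
  exact ⟨⟨h.monotone_odd, fun k => hmem _ (Multiset.mem_add.2 (.inl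
      (Multiset.mem_map_of_mem _ (mem_univ k)))), fun i => (hcount i).1⟩,
    ⟨h.monotone_even, fun k => hmem _ (Multiset.mem_add.2 (.inr
      (Multiset.mem_map_of_mem _ (mem_univ k)))), fun i => (hcount i).2⟩⟩

end IsSplit

theorem exists_isSplit (α β : Fin τ → ℕ) : ∃ γo γe, IsSplit α β γo γe := by
  set l := ((List.ofFn α ++ List.ofFn β : List ℕ) : Multiset ℕ).sort (· ≤ ·)
  have hl : l.length = 2 * τ := by simp [l]; omega
  let γ : Fin (2 * τ) → ℕ := fun j => l[j.1]
  refine ⟨fun t => γ ⟨2 * t, by omega⟩, fun t => γ ⟨2 * t + 1, by omega⟩, γ, ?_, ?_,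
    fun t => ⟨rfl, rfl⟩⟩
  · exact fun i j hij => (Multiset.pairwise_sort _ _).rel_get_of_le hij
  · have : List.ofFn γ = l := List.ext_getElem (by simp [hl]) fun _ _ _ => by simp [γ]
    rw [this, Multiset.sort_eq]


namespace SegreVeronese

-- The second component is not truncated, as `∑ a ∈ range A, countLE v a ≤ τ * A`.
def weight (A : ℕ) (v : Fin τ → ℕ) : ℕ ×ₗ ℕ :=
  toLex (∑ a ∈ range A, countLE v a ^ 2, (τ * A) ^ 2 - (∑ a ∈ range A, countLE v a) ^ 2)

theorem mem_range_of_countLE_ne {A a : ℕ} {α β : Fin τ → ℕ} (hαA : ∀ k, α k < A)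
    (hβA : ∀ k, β k < A) (ha : countLE α a ≠ countLE β a) : a ∈ range A := mem_range.2 <| by
  by_contra! hA
  exact ha (by rw [countLE_eq_of_forall_lt hαA hA, countLE_eq_of_forall_lt hβA hA])

end SegreVeronese

namespace IsSplit

variable {A : ℕ} {α β γo γe : Fin τ → ℕ} (h : IsSplit α β γo γe)
include h

theorem weight_add_lt_of_far (hαA : ∀ k, α k < A) (hβA : ∀ k, β k < A) {a : ℕ}
    (hfar : countLE α a + 2 ≤ countLE β a ∨ countLE β a + 2 ≤ countLE α a) :
    weight A γo + weight A γe < weight A α + weight A β := by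
  have hsum := h.countLE_add
  have hbal := h.pairOrdered.countLE_le_countLE
  simp only [weight, ← toLex_add, Prod.mk_add_mk, Prod.Lex.toLex_lt_toLex, ← sum_add_distrib]
  exact .inl <| sum_lt_sum
    (fun a _ => Nat.sq_add_sq_le_of_balanced (hsum a) (hbal a).1 (hbal a).2)
    ⟨a, mem_range_of_countLE_ne hαA hβA (by omega),
      Nat.sq_add_sq_lt_of_balanced (hsum a) (hbal a).1 (hbal a).2 hfar⟩

theorem weight_add_lt_of_close (hα : Monotone α) (hβ : Monotone β) (hαA : ∀ k, α k < A)
    (hβA : ∀ k, β k < A) (hns : Nonsorted α β)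
    (hclose : ∀ a, countLE α a ≤ countLE β a + 1 ∧ countLE β a ≤ countLE α a + 1) :
    weight A γo + weight A γe < weight A α + weight A β := by
  -- the split takes the pointwise maximum and minimum of two crossing distribution functions
  have hmax (a : ℕ) : countLE γo a = max (countLE α a) (countLE β a) ∧
      countLE γe a = min (countLE α a) (countLE β a) := by
    have := h.countLE_add a
    have := h.pairOrdered.countLE_le_countLE a
    have := hclose a
    omega
  obtain ⟨⟨a₁, ha₁⟩, a₂, ha₂⟩ := hns.exists_countLE_lt hα hβ hclose
  have hα_lt : ∑ a ∈ range A, countLE α a < ∑ a ∈ range A, countLE γo a :=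
    sum_lt_sum (fun a _ => (hmax a).1 ▸ le_max_left _ _)
      ⟨a₁, mem_range_of_countLE_ne hαA hβA ha₁.ne, by have := hmax a₁; omega⟩
  have hβ_lt : ∑ a ∈ range A, countLE β a < ∑ a ∈ range A, countLE γo a :=
    sum_lt_sum (fun a _ => (hmax a).1 ▸ le_max_right _ _)
      ⟨a₂, mem_range_of_countLE_ne hαA hβA ha₂.ne', by have := hmax a₂; omega⟩
  have htot : ∑ a ∈ range A, countLE γo a + ∑ a ∈ range A, countLE γe a
      = ∑ a ∈ range A, countLE α a + ∑ a ∈ range A, countLE β a := by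
    rw [← sum_add_distrib, ← sum_add_distrib]
    exact sum_congr rfl fun a _ => h.countLE_add a
  have := Nat.sq_add_sq_lt_of_lt htot hα_lt hβ_lt
  have := Nat.pow_le_pow_left (sum_countLE_le α A) 2
  have := Nat.pow_le_pow_left (sum_countLE_le β A) 2
  have := Nat.pow_le_pow_left (sum_countLE_le γo A) 2
  have := Nat.pow_le_pow_left (sum_countLE_le γe A) 2
  simp only [weight, ← toLex_add, Prod.mk_add_mk, Prod.Lex.toLex_lt_toLex]
  refine .inr ⟨?_, by omega⟩
  rw [← sum_add_distrib, ← sum_add_distrib]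
  refine sum_congr rfl fun a _ => ?_
  rw [(hmax a).1, (hmax a).2]
  rcases le_total (countLE α a) (countLE β a) with hle | hle <;> simp [hle, add_comm]

theorem weight_add_lt (hα : Monotone α) (hβ : Monotone β) (hαA : ∀ k, α k < A)
    (hβA : ∀ k, β k < A) (hns : Nonsorted α β) :
    weight A γo + weight A γe < weight A α + weight A β := by
  by_cases hfar : ∃ a, countLE α a + 2 ≤ countLE β a ∨ countLE β a + 2 ≤ countLE α a
  · obtain ⟨a, ha⟩ := hfar
    exact h.weight_add_lt_of_far hαA hβA ha
  · push Not at hfar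
    exact h.weight_add_lt_of_close hα hβ hαA hβA hns fun a => by have := hfar a; omega

end IsSplit

namespace SegreVeronese

def content (m : Multiset (Fin τ → ℕ)) : Multiset ℕ := m.bind entries

def IsSorted (m : Multiset (Fin τ → ℕ)) : Prop :=
  ∀ x ∈ m, ∀ y ∈ m, PairOrdered x y ∨ PairOrdered y x

@[simp]
theorem content_cons (x : Fin τ → ℕ) (m : Multiset (Fin τ → ℕ)) :
    content (x ::ₘ m) = entries x + content m :=
  Multiset.cons_bind _ _ _

theorem card_content (m : Multiset (Fin τ → ℕ)) :
    Multiset.card (content m) = τ * Multiset.card m := by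
  simp [content, Multiset.card_bind, entries, mul_comm]

theorem countP_le_content (m : Multiset (Fin τ → ℕ)) (a : ℕ) :
    (content m).countP (· ≤ a) = (m.map (countLE · a)).sum := by
  induction m using Multiset.induction with
  | empty => simp [content]
  | cons x m ih => simp [Multiset.countP_add, ih, countP_entries, countLE]

theorem IsSorted.of_cons {x : Fin τ → ℕ} {m : Multiset (Fin τ → ℕ)} (hs : IsSorted (x ::ₘ m)) :
    IsSorted m :=
  fun y hy z hz => hs y (Multiset.mem_cons_of_mem hy) z (Multiset.mem_cons_of_mem hz)

theorem IsSorted.exists_min {m : Multiset (Fin τ → ℕ)} (hs : IsSorted m)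
    (hm : ∀ x ∈ m, Monotone x) (h0 : m ≠ 0) : ∃ μ ∈ m, ∀ x ∈ m, PairOrdered μ x := by
  obtain ⟨μ, hμ, hmin⟩ := Multiset.exists_min_image (fun x => ∑ t, x t) h0
  refine ⟨μ, hμ, fun x hx => (hs μ hμ x hx).elim id fun hxμ => ?_⟩
  have hsum := (sum_eq_sum_iff_of_le fun t _ => hxμ.1 t).1
    (le_antisymm (sum_le_sum fun t _ => hxμ.1 t) (hmin x hx))
  obtain rfl : x = μ := funext fun t => hsum t (mem_univ t)
  exact pairOrdered_self (hm x hx)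

theorem countLE_eq_of_forall_pairOrdered {m : Multiset (Fin τ → ℕ)} {μ : Fin τ → ℕ}
    (hμ : μ ∈ m) (hmin : ∀ x ∈ m, PairOrdered μ x) (a : ℕ) :
    countLE μ a = ((content m).countP (· ≤ a) + Multiset.card m - 1) / Multiset.card m := by
  obtain ⟨m, rfl⟩ := Multiset.exists_cons_of_mem hμ
  have hle (x) (hx : x ∈ m) := (hmin x (Multiset.mem_cons_of_mem hx)).countLE_le_countLE a
  have hupper : (m.map (countLE · a)).sum ≤ Multiset.card m * countLE μ a := by
    simpa using Multiset.sum_map_le_sum_map _ (fun _ => countLE μ a) fun x hx => (hle x hx).1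
  have hlower : Multiset.card m * countLE μ a ≤ (m.map (countLE · a)).sum + Multiset.card m := by
    simpa [Multiset.sum_map_add] using
      Multiset.sum_map_le_sum_map (fun _ => countLE μ a) (countLE · a + 1) fun x hx =>
        (hle x hx).2
  rw [countP_le_content, Multiset.map_cons, Multiset.sum_cons, Multiset.card_cons,
    Nat.add_succ_sub_one]
  symm
  apply Nat.div_eq_of_lt_le <;> nlinarith

theorem IsSorted.eq_of_content_eq (hτ : 0 < τ) {m m' : Multiset (Fin τ → ℕ)} (hs : IsSorted m)
    (hs' : IsSorted m') (hm : ∀ x ∈ m, Monotone x) (hm' : ∀ x ∈ m', Monotone x)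
    (h : content m = content m') : m = m' := by
  have hcard : Multiset.card m' = Multiset.card m := by
    have := congrArg Multiset.card h
    rw [card_content, card_content] at this
    exact (Nat.eq_of_mul_eq_mul_left hτ this).symm
  induction hn : Multiset.card m generalizing m m' with
  | zero => rw [Multiset.card_eq_zero.1 hn, Multiset.card_eq_zero.1 (hcard.trans hn)]
  | succ n ih =>
    obtain ⟨μ, hμ, hmin⟩ := hs.exists_min hm (by rintro rfl; simp at hn)
    obtain ⟨μ', hμ', hmin'⟩ := hs'.exists_min hm' (by rintro rfl; simp at hcard; omega)
    obtain rfl : μ = μ' := eq_of_countLE_eq (hm μ hμ) (hm' μ' hμ') <| funext fun a => by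
      rw [countLE_eq_of_forall_pairOrdered hμ hmin, countLE_eq_of_forall_pairOrdered hμ' hmin',
        h, hcard]
    obtain ⟨r, rfl⟩ := Multiset.exists_cons_of_mem hμ
    obtain ⟨r', rfl⟩ := Multiset.exists_cons_of_mem hμ'
    rw [ih hs.of_cons hs'.of_cons (fun x hx => hm x (Multiset.mem_cons_of_mem hx))
      (fun x hx => hm' x (Multiset.mem_cons_of_mem hx))
      (by simpa using h) (by simpa using hcard) (by simpa using hn)]

variable {K : Type*} [Field K]

local notation "V" => {x : Fin τ → ℕ // Admissible τ d M b c s r x}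

def sortingBinomials : Set (MvPolynomial V K) :=
  {g | ∃ α β γodd γeven : V, Nonsorted α.1 β.1 ∧ IsSplit α.1 β.1 γodd.1 γeven.1 ∧
    g = X α * X β - X γodd * X γeven}

theorem cons_cons_sub_mem_span {x y xo xe : V} (t : Multiset V) (hxy : Nonsorted x.1 y.1)
    (hsplit : IsSplit x.1 y.1 xo.1 xe.1) :
    ((x ::ₘ y ::ₘ t).map X).prod - ((xo ::ₘ xe ::ₘ t).map X).prod
      ∈ Ideal.span (sortingBinomials (K := K)) := by
  have hbin : X x * X y - X xo * X xe ∈ sortingBinomials (K := K) :=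
    ⟨x, y, xo, xe, hxy, hsplit, rfl⟩
  convert Ideal.mul_mem_left _ ((t.map X).prod) (Ideal.subset_span hbin) using 1
  simp only [Multiset.map_cons, Multiset.prod_cons]
  ring

theorem exists_isSorted_sub_mem_span (m : Multiset V) :
    ∃ ms : Multiset V, IsSorted (ms.map Subtype.val) ∧
      content (ms.map Subtype.val) = content (m.map Subtype.val) ∧
      (m.map X).prod - (ms.map X).prod ∈ Ideal.span (sortingBinomials (K := K)) := by
  generalize hw : (m.map fun v => weight (d + 1) v.1).sum = w
  induction w using WellFoundedLT.induction generalizing m with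
  | _ w ih =>
  by_cases hs : IsSorted (m.map Subtype.val)
  · exact ⟨m, hs, rfl, by simp⟩
  obtain ⟨x, y, t, rfl, hxy⟩ := Multiset.exists_eq_cons_cons_of_not_forall
    (R := fun x y : V => PairOrdered x.1 y.1 ∨ PairOrdered y.1 x.1)
    (fun v => .inl (pairOrdered_self v.2.mono)) (by simpa [IsSorted] using hs)
  obtain ⟨γo, γe, hsplit⟩ := exists_isSplit x.1 y.1
  let xo : V := ⟨γo, (hsplit.admissible x.2 y.2).1⟩
  let xe : V := ⟨γe, (hsplit.admissible x.2 y.2).2⟩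
  have hlt : ((xo ::ₘ xe ::ₘ t).map fun v => weight (d + 1) v.1).sum < w := by
    have hbound (v : V) (k : Fin τ) : v.1 k < d + 1 := Nat.lt_succ_of_le (v.2.mem k).2
    rw [← hw]
    simpa [← add_assoc] using
      hsplit.weight_add_lt x.2.mono y.2.mono (hbound x) (hbound y) hxy
  obtain ⟨ms, hms, hcont, hmem⟩ := ih _ hlt (xo ::ₘ xe ::ₘ t) rfl
  refine ⟨ms, hms, hcont.trans ?_, ?_⟩
  · simpa [← add_assoc] using hsplit.entries_add
  · have := Ideal.add_mem _ (cons_cons_sub_mem_span (xo := xo) (xe := xe) t hxy hsplit) hmem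
    rwa [sub_add_sub_cancel] at this

theorem prod_X_sub_mem_span_of_content_eq (hτ : 0 < τ) {m m' : Multiset V}
    (h : content (m.map Subtype.val) = content (m'.map Subtype.val)) :
    (m.map X).prod - (m'.map X).prod ∈ Ideal.span (sortingBinomials (K := K)) := by
  obtain ⟨ms, hs, hc, hmem⟩ := exists_isSorted_sub_mem_span (K := K) m
  obtain ⟨ms', hs', hc', hmem'⟩ := exists_isSorted_sub_mem_span (K := K) m'
  have hmono (m : Multiset V) : ∀ x ∈ m.map Subtype.val, Monotone x :=
    Multiset.forall_mem_map_iff.2 fun v _ => v.2.mono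
  obtain rfl : ms = ms' := Multiset.map_injective Subtype.val_injective <|
    hs.eq_of_content_eq hτ hs' (hmono ms) (hmono ms') (by rw [hc, hc', h])
  simpa using Ideal.sub_mem _ hmem hmem'

def vars (v : V) : Multiset (Fin d) :=
  univ.val.map fun k => ⟨v.1 k - 1, by have := v.2.mem k; omega⟩

theorem piSV_eq_aeval : piSV τ d M b c s r K = aeval fun v => ((vars v).map X).prod := by
  unfold piSV
  congr
  funext v
  rw [vars, Multiset.map_map]
  rfl

theorem content_eq_map_bind_vars (m : Multiset V) :
    content (m.map Subtype.val) = (m.bind vars).map fun i => i.1 + 1 := by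
  rw [Multiset.map_bind, content, Multiset.bind_map]
  refine Multiset.bind_congr fun v _ => ?_
  rw [vars, Multiset.map_map, entries]
  exact Multiset.map_congr rfl fun k _ => by have := v.2.mem k; simp; omega

theorem bind_vars_eq_iff {m m' : Multiset V} :
    m.bind vars = m'.bind vars ↔ content (m.map Subtype.val) = content (m'.map Subtype.val) := by
  rw [content_eq_map_bind_vars, content_eq_map_bind_vars]
  exact (Multiset.map_injective fun i j h => Fin.ext (by simpa using h)).eq_iff.symm

end SegreVeronese

end

open SegreVeronese

theorem stmt_7 (hτ : 2 ≤ τ)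
    (K : Type*) [Field K] :
    RingHom.ker (piSV τ d M b c s r K)
      = Ideal.span
          { g : MvPolynomial {x : Fin τ → ℕ // Admissible τ d M b c s r x} K |
            ∃ α β γodd γeven : {x : Fin τ → ℕ // Admissible τ d M b c s r x},
              Nonsorted α.1 β.1 ∧ IsSplit α.1 β.1 γodd.1 γeven.1 ∧
              g = X α * X β - X γodd * X γeven } := by
  rw [piSV_eq_aeval, MvPolynomial.ker_aeval_prod_map_X]
  refine le_antisymm (Ideal.span_le.2 ?_) (Ideal.span_le.2 ?_)
  · rintro _ ⟨m, m', h, rfl⟩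
    exact prod_X_sub_mem_span_of_content_eq (by omega) (bind_vars_eq_iff.1 h)
  · rintro _ ⟨α, β, γo, γe, -, hsplit, rfl⟩
    refine Ideal.subset_span ⟨{α, β}, {γo, γe}, bind_vars_eq_iff.2 ?_, by simp⟩
    simpa [content] using hsplit.entries_add.symm
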